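/- arXiv:2508.06483 — 3 statements merged into one kernel-verified Lean document; each statement's English description precedes it below -/
import Mathlib

section
/- Let (S_t, V_t) be a sub-ψ_N process with ψ_N(λ) = λ²/2 and λ_max = ∞ (a sub-Gaussian process in ℝ^d), and let U_0 be a fixed symmetric positive-definite d×d matrix. Then for every δ ∈ (0,1), with probability at least 1−δ, for all t ≥ 1: ‖S_t‖²_{(V_t+U_0)⁻¹} ≤ log(det(V_t+U_0)/det U_0) + 2·log(1/δ). -/
/-! Method of mixtures. For each fixed `x`, `exp (⟨x, S_t⟩ - ‖x‖²_{V_t} / 2)` is dominated by a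
nonnegative supermartingale started below `1` (take `λ = ‖x‖`, `θ = x / ‖x‖`). Integrating over
`x` against the unnormalised Gaussian weight `exp (-‖x‖²_{U₀} / 2)` and completing the square gives
`(2π)^{d/2} det (V_t + U₀)^{-1/2} exp (‖S_t‖²_{(V_t+U₀)⁻¹} / 2)`, which is at least
`(2π)^{d/2} det U₀^{-1/2} / δ` whenever the bound fails at time `t`. Summing over the first
failure times, swapping the integrals (Tonelli) and applying optional stopping for each fixed `x`
bounds the probability of failure by `δ`. Only the explicit exponentials are integrated in `x`, so
no measurability of the supermartingales in `x` is needed. -/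

open MeasureTheory Filter Matrix Real Set
open scoped ENNReal NNReal

noncomputable section

variable {d : ℕ} {Ω : Type*}

/-- The quadratic form `⟨v, A v⟩`. -/
def quadForm (A : Matrix (Fin d) (Fin d) ℝ) (v : Fin d → ℝ) : ℝ := v ⬝ᵥ A.mulVec v

/-- The self-normalized norm `‖v‖_A = √⟨v, A v⟩`. -/
def matNorm (A : Matrix (Fin d) (Fin d) ℝ) (v : Fin d → ℝ) : ℝ := Real.sqrt (quadForm A v)

/-- A sub-ψ process in ℝ^d: adapted `S`, adapted positive-definite `V`, and for each unit
vector θ and each λ in the domain `D`, the process `exp(λ⟨θ,S_t⟩ − ψ(λ)⟨θ,V_tθ⟩)` is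
dominated by a nonnegative supermartingale starting ≤ 1. -/
def IsSubPsi [m : MeasurableSpace Ω] (P : Measure Ω) (F : Filtration ℕ m)
    (D : Set ℝ) (ψ : ℝ → ℝ)
    (S : ℕ → Ω → Fin d → ℝ) (V : ℕ → Ω → Matrix (Fin d) (Fin d) ℝ) : Prop :=
  StronglyAdapted F S ∧ StronglyAdapted F V ∧ (∀ t ω, (V t ω).PosDef) ∧
  ∀ θ : Fin d → ℝ, θ ⬝ᵥ θ = 1 → ∀ lam ∈ D, ∃ L : ℕ → Ω → ℝ,
    Supermartingale L F P ∧ (∀ t ω, 0 ≤ L t ω) ∧ (∀ ω, L 0 ω ≤ 1) ∧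
    ∀ t, ∀ᵐ ω ∂P, Real.exp (lam * (θ ⬝ᵥ S t ω) - ψ lam * quadForm (V t ω) θ) ≤ L t ω

lemma matNorm_sq {A : Matrix (Fin d) (Fin d) ℝ} (hA : A.PosSemidef) (v : Fin d → ℝ) :
    matNorm A v ^ 2 = quadForm A v :=
  Real.sq_sqrt (hA.dotProduct_mulVec_nonneg v)

lemma quadForm_add (A B : Matrix (Fin d) (Fin d) ℝ) (v : Fin d → ℝ) :
    quadForm (A + B) v = quadForm A v + quadForm B v := by
  simp only [quadForm, add_mulVec, dotProduct_add]

lemma quadForm_smul (A : Matrix (Fin d) (Fin d) ℝ) (c : ℝ) (v : Fin d → ℝ) :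
    quadForm A (c • v) = c ^ 2 * quadForm A v := by
  simp only [quadForm, mulVec_smul, smul_dotProduct, dotProduct_smul, smul_eq_mul]
  ring

@[fun_prop]
lemma Continuous.quadForm {X : Type*} [TopologicalSpace X] {A : X → Matrix (Fin d) (Fin d) ℝ}
    {v : X → Fin d → ℝ} (hA : Continuous A) (hv : Continuous v) :
    Continuous fun x => quadForm (A x) (v x) :=
  hv.dotProduct (hA.matrix_mulVec hv)

instance {ι κ : Type*} : MeasurableSpace (Matrix ι κ ℝ) := borel _

instance {ι κ : Type*} : BorelSpace (Matrix ι κ ℝ) := ⟨rfl⟩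

instance {ι κ : Type*} [Countable ι] [Countable κ] :
    TopologicalSpace.PseudoMetrizableSpace (Matrix ι κ ℝ) :=
  inferInstanceAs (TopologicalSpace.PseudoMetrizableSpace (ι → κ → ℝ))

@[fun_prop]
lemma Measurable.quadForm {X : Type*} [MeasurableSpace X] {A : X → Matrix (Fin d) (Fin d) ℝ}
    {v : X → Fin d → ℝ} (hA : Measurable A) (hv : Measurable v) :
    Measurable fun x => quadForm (A x) (v x) :=
  (continuous_fst.quadForm continuous_snd).measurable2 hA hv

@[fun_prop]
lemma Measurable.matrix_inv {X : Type*} [MeasurableSpace X] {A : X → Matrix (Fin d) (Fin d) ℝ}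
    (hA : Measurable A) : Measurable fun x => (A x)⁻¹ := by
  simp only [inv_def, Ring.inverse_eq_inv']
  exact ((continuous_id.matrix_det.measurable.comp hA).inv).smul
    (continuous_id.matrix_adjugate.measurable.comp hA)

lemma lintegral_exp_neg_dotProduct_self_div_two {ι : Type*} [Fintype ι] :
    ∫⁻ z : ι → ℝ, ENNReal.ofReal (Real.exp (-(z ⬝ᵥ z / 2)))
      = ENNReal.ofReal (√(2 * π) ^ Fintype.card ι) := by
  have hprod : ∀ z : ι → ℝ, Real.exp (-(z ⬝ᵥ z / 2)) = ∏ i, Real.exp (-(1 / 2) * z i ^ 2) := by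
    intro z
    rw [← Real.exp_sum, dotProduct, Finset.sum_div, ← Finset.sum_neg_distrib]
    exact congrArg _ (Finset.sum_congr rfl fun i _ => by ring)
  have hint : Integrable (fun z : ι → ℝ => ∏ i, Real.exp (-(1 / 2) * z i ^ 2)) :=
    Integrable.fintype_prod (f := fun _ y => Real.exp (-(1 / 2) * y ^ 2))
      fun _ => integrable_exp_neg_mul_sq (by norm_num)
  have h1 : ∫ y : ℝ, Real.exp (-(1 / 2) * y ^ 2) = √(2 * π) := by
    rw [integral_gaussian]
    congr 1
    field_simp
  simp only [hprod]
  rw [← ofReal_integral_eq_lintegral_ofReal hint (Eventually.of_forall fun z => by positivity),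
    volume_pi, integral_fintype_prod_eq_pow (fun y : ℝ => Real.exp (-(1 / 2) * y ^ 2)), h1]

lemma lintegral_eq_abs_det_mul_lintegral_mulVec_add {ι : Type*} [Fintype ι] [DecidableEq ι]
    {C : Matrix ι ι ℝ} (hC : C.det ≠ 0) {f : (ι → ℝ) → ℝ≥0∞} (hf : Measurable f) (b : ι → ℝ) :
    ∫⁻ x, f x = ENNReal.ofReal |C.det| * ∫⁻ z, f (C *ᵥ z + b) := by
  have hT : LinearMap.det (toLin' C) ≠ 0 := by rwa [LinearMap.det_toLin']
  have hmap := Real.map_linearMap_volume_pi_eq_smul_volume_pi hT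
  rw [LinearMap.det_toLin'] at hmap
  have hcomp : ∫⁻ z, f (C *ᵥ z + b) = ENNReal.ofReal |C.det⁻¹| * ∫⁻ x, f x := by
    rw [← lintegral_add_right_eq_self (fun x => f x) b,
      ← smul_eq_mul, ← lintegral_smul_measure, ← hmap,
      lintegral_map (f := fun x => f (x + b)) (hf.comp (measurable_add_const b))
        (toLin' C).continuous_of_finiteDimensional.measurable]
    rfl
  rw [hcomp, ← mul_assoc, ← ENNReal.ofReal_mul (abs_nonneg _), ← abs_mul, mul_inv_cancel₀ hC]
  simp

open scoped MatrixOrder in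
lemma exists_transpose_mul_mul_eq_one {B : Matrix (Fin d) (Fin d) ℝ} (hB : B.PosDef) :
    ∃ C : Matrix (Fin d) (Fin d) ℝ, Cᵀ * B * C = 1 ∧ |C.det| = (√B.det)⁻¹ := by
  set C := CFC.sqrt B⁻¹
  have hCC : C * C = B⁻¹ := CFC.sqrt_mul_sqrt_self _ hB.inv.posSemidef.nonneg
  have hCt : Cᵀ = C := (CFC.sqrt_nonneg B⁻¹).posSemidef.isHermitian
  have hdet : C.det * C.det = B.det⁻¹ := by
    rw [← det_mul, hCC, det_nonsing_inv, Ring.inverse_eq_inv']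
  have hCdet : IsUnit C.det := Ne.isUnit fun h => hB.det_pos.ne (by simpa [h] using hdet)
  refine ⟨C, ?_, ?_⟩
  · have : C * (C * B * C) = C := by
      rw [← mul_assoc, ← mul_assoc, hCC, nonsing_inv_mul _ hB.det_pos.ne'.isUnit, one_mul]
    rw [hCt, ← C.nonsing_inv_mul_cancel_left (C * B * C) hCdet, this, nonsing_inv_mul _ hCdet]
  · rw [← Real.sqrt_mul_self_eq_abs, hdet, Real.sqrt_inv]

lemma dotProduct_sub_quadForm_mulVec_add {B C : Matrix (Fin d) (Fin d) ℝ} (hB : B.PosDef)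
    (hC : Cᵀ * B * C = 1) (s z : Fin d → ℝ) :
    (C *ᵥ z + B⁻¹ *ᵥ s) ⬝ᵥ s - quadForm B (C *ᵥ z + B⁻¹ *ᵥ s) / 2
      = quadForm B⁻¹ s / 2 - z ⬝ᵥ z / 2 := by
  have hBt : Bᵀ = B := hB.isHermitian
  have hBm : B *ᵥ (B⁻¹ *ᵥ s) = s := by
    rw [mulVec_mulVec, mul_nonsing_inv _ hB.det_pos.ne'.isUnit, one_mulVec]
  have hCz : (C *ᵥ z) ⬝ᵥ (B *ᵥ (C *ᵥ z)) = z ⬝ᵥ z := by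
    have hadj : ∀ y, (C *ᵥ z) ⬝ᵥ y = z ⬝ᵥ (Cᵀ *ᵥ y) := fun y => by
      rw [dotProduct_mulVec, vecMul_transpose]
    rw [hadj, mulVec_mulVec, mulVec_mulVec, hC, one_mulVec]
  have hsym : B⁻¹ *ᵥ s ⬝ᵥ B *ᵥ (C *ᵥ z) = C *ᵥ z ⬝ᵥ s := by
    rw [dotProduct_mulVec, ← mulVec_transpose, hBt, hBm, dotProduct_comm]
  simp only [quadForm, mulVec_add, dotProduct_add, add_dotProduct, hBm, hCz, hsym]
  rw [dotProduct_comm s]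
  ring

theorem lintegral_exp_dotProduct_sub_quadForm {B : Matrix (Fin d) (Fin d) ℝ} (hB : B.PosDef)
    (s : Fin d → ℝ) :
    ∫⁻ x, ENNReal.ofReal (Real.exp (x ⬝ᵥ s - quadForm B x / 2))
      = ENNReal.ofReal (√(2 * π) ^ d / √B.det * Real.exp (quadForm B⁻¹ s / 2)) := by
  obtain ⟨C, hC, hdetC⟩ := exists_transpose_mul_mul_eq_one hB
  have hC0 : C.det ≠ 0 := abs_pos.mp (hdetC ▸ inv_pos.mpr (Real.sqrt_pos.mpr hB.det_pos))
  have hmeas : Measurable fun x : Fin d → ℝ =>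
      ENNReal.ofReal (Real.exp (x ⬝ᵥ s - quadForm B x / 2)) :=
    (by fun_prop : Continuous fun x : Fin d → ℝ =>
      Real.exp (x ⬝ᵥ s - quadForm B x / 2)).measurable.ennreal_ofReal
  rw [lintegral_eq_abs_det_mul_lintegral_mulVec_add hC0 hmeas (B⁻¹ *ᵥ s)]
  simp only [dotProduct_sub_quadForm_mulVec_add hB hC, sub_eq_add_neg, Real.exp_add,
    ENNReal.ofReal_mul (Real.exp_nonneg _)]
  rw [lintegral_const_mul' _ _ ENNReal.ofReal_ne_top, lintegral_exp_neg_dotProduct_self_div_two,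
    Fintype.card_fin, hdetC, ← ENNReal.ofReal_mul (by positivity),
    ← ENNReal.ofReal_mul (by positivity)]
  congr 1
  ring

lemma div_sqrt_div_le_div_sqrt_mul_exp {k a b δ q : ℝ} (hk : 0 ≤ k) (ha : 0 < a) (hb : 0 < b)
    (hδ : 0 < δ) (h : Real.log (a / b) + 2 * Real.log (1 / δ) ≤ q) :
    k / √b / δ ≤ k / √a * Real.exp (q / 2) := by
  have hexp : √(a / b) / δ ≤ Real.exp (q / 2) := by
    rw [← Real.log_le_iff_le_exp (by positivity), Real.log_div (by positivity) hδ.ne',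
      Real.log_sqrt (by positivity)]
    rw [one_div, Real.log_inv] at h
    linarith
  calc k / √b / δ = k / √a * (√(a / b) / δ) := by
        rw [Real.sqrt_div ha.le]
        field_simp
    _ ≤ k / √a * Real.exp (q / 2) := by gcongr

lemma withDensity_exp_neg_quadForm_apply_univ {U : Matrix (Fin d) (Fin d) ℝ} (hU : U.PosDef) :
    volume.withDensity (fun x => ENNReal.ofReal (Real.exp (-(quadForm U x / 2)))) univ
      = ENNReal.ofReal (√(2 * π) ^ d / √U.det) := by
  have h := lintegral_exp_dotProduct_sub_quadForm hU 0
  simp only [dotProduct_zero, quadForm, mulVec_zero, zero_sub, zero_div, Real.exp_zero,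
    mul_one] at h
  rw [withDensity_apply _ MeasurableSet.univ, Measure.restrict_univ, ← h]
  rfl

lemma lintegral_exp_dotProduct_sub_quadForm_withDensity {V U : Matrix (Fin d) (Fin d) ℝ}
    (hVU : (V + U).PosDef) (s : Fin d → ℝ) :
    ∫⁻ x, ENNReal.ofReal (Real.exp (x ⬝ᵥ s - quadForm V x / 2))
        ∂(volume.withDensity fun x => ENNReal.ofReal (Real.exp (-(quadForm U x / 2))))
      = ENNReal.ofReal (√(2 * π) ^ d / √(V + U).det * Real.exp (quadForm (V + U)⁻¹ s / 2)) := by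
  rw [lintegral_withDensity_eq_lintegral_mul _ (by fun_prop) (by fun_prop),
    ← lintegral_exp_dotProduct_sub_quadForm hVU s]
  congr 1
  funext x
  rw [Pi.mul_apply, ← ENNReal.ofReal_mul (Real.exp_nonneg _), ← Real.exp_add, quadForm_add]
  ring_nf

section MethodOfMixtures

open Function

variable {m : MeasurableSpace Ω} {P : Measure Ω} {F : Filtration ℕ m}

def HasSupermartingaleMajorant (F : Filtration ℕ m) (P : Measure Ω) (g : ℕ → Ω → ℝ) : Prop :=
  ∃ L : ℕ → Ω → ℝ, Supermartingale L F P ∧ (∀ t ω, 0 ≤ L t ω) ∧ (∀ ω, L 0 ω ≤ 1) ∧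
    ∀ t, ∀ᵐ ω ∂P, g t ω ≤ L t ω

lemma MeasureTheory.Supermartingale.sum_setIntegral_add_setIntegral_compl_le [IsFiniteMeasure P]
    {L : ℕ → Ω → ℝ} (hL : Supermartingale L F P) {E : ℕ → Set Ω}
    (hE : ∀ t, MeasurableSet[F t] (E t)) (hdisj : Pairwise (Disjoint on E)) (N : ℕ) :
    ∑ t ∈ Finset.range N, ∫ ω in E t, L t ω ∂P + ∫ ω in (⋃ t ∈ Finset.range N, E t)ᶜ, L N ω ∂P
      ≤ ∫ ω, L 0 ω ∂P := by
  induction N with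
  | zero => simp
  | succ N ih =>
    set C := (⋃ t ∈ Finset.range N, E t)ᶜ
    have hC : MeasurableSet[F N] C := (MeasurableSet.biUnion (Finset.range N).countable_toSet
      fun t ht => F.mono (Finset.mem_range.mp ht).le _ (hE t)).compl
    have hEC : C ∩ E N = E N := Set.inter_eq_right.mpr fun ω hω => by
      simp only [C, Set.mem_compl_iff, Set.mem_iUnion, not_exists]
      exact fun t ht hωt => (hdisj (Finset.mem_range.mp ht).ne).le_bot ⟨hωt, hω⟩
    have hsucc : (⋃ t ∈ Finset.range (N + 1), E t)ᶜ = C \ E N := by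
      simp [C, Finset.range_add_one, Set.sdiff_eq, Set.inter_comm]
    have hsplit : ∫ ω in E N, L N ω ∂P + ∫ ω in C \ E N, L N ω ∂P = ∫ ω in C, L N ω ∂P := by
      simpa only [hEC] using
        integral_inter_add_sdiff (s := C) (F.le N _ (hE N)) (hL.integrable N).integrableOn
    have hstep : ∫ ω in C \ E N, L (N + 1) ω ∂P ≤ ∫ ω in C \ E N, L N ω ∂P :=
      hL.setIntegral_le N.le_succ (hC.diff (hE N))
    rw [Finset.sum_range_succ, hsucc]
    linarith

lemma MeasureTheory.Supermartingale.tsum_setLIntegral_le [IsFiniteMeasure P]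
    {L : ℕ → Ω → ℝ} (hL : Supermartingale L F P) (hL_nonneg : ∀ t ω, 0 ≤ L t ω) {E : ℕ → Set Ω}
    (hE : ∀ t, MeasurableSet[F t] (E t)) (hdisj : Pairwise (Disjoint on E)) :
    ∑' t, ∫⁻ ω in E t, ENNReal.ofReal (L t ω) ∂P ≤ ENNReal.ofReal (∫ ω, L 0 ω ∂P) := by
  refine ENNReal.tsum_le_of_sum_range_le fun N => ?_
  have hint : ∀ t, ∫⁻ ω in E t, ENNReal.ofReal (L t ω) ∂P
      = ENNReal.ofReal (∫ ω in E t, L t ω ∂P) := fun t =>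
    (ofReal_integral_eq_lintegral_ofReal (hL.integrable t).integrableOn
      (Eventually.of_forall (hL_nonneg t))).symm
  simp only [hint]
  rw [← ENNReal.ofReal_sum_of_nonneg fun t _ => setIntegral_nonneg (F.le t _ (hE t))
    fun ω _ => hL_nonneg t ω]
  refine ENNReal.ofReal_le_ofReal
    (le_trans ?_ (hL.sum_setIntegral_add_setIntegral_compl_le hE hdisj N))
  exact le_add_of_nonneg_right (setIntegral_nonneg_of_ae_restrict
    (Eventually.of_forall (hL_nonneg N)))

lemma HasSupermartingaleMajorant.tsum_setLIntegral_le_one [IsProbabilityMeasure P]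
    {g : ℕ → Ω → ℝ} (hg : HasSupermartingaleMajorant F P g) {E : ℕ → Set Ω}
    (hE : ∀ t, MeasurableSet[F t] (E t)) (hdisj : Pairwise (Disjoint on E)) :
    ∑' t, ∫⁻ ω in E t, ENNReal.ofReal (g t ω) ∂P ≤ 1 := by
  obtain ⟨L, hL, hL_nonneg, hL0, hgL⟩ := hg
  calc ∑' t, ∫⁻ ω in E t, ENNReal.ofReal (g t ω) ∂P
      ≤ ∑' t, ∫⁻ ω in E t, ENNReal.ofReal (L t ω) ∂P := ENNReal.tsum_le_tsum fun t =>
        lintegral_mono_ae (ae_restrict_of_ae ((hgL t).mono fun ω h => ENNReal.ofReal_le_ofReal h))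
    _ ≤ ENNReal.ofReal (∫ ω, L 0 ω ∂P) := hL.tsum_setLIntegral_le hL_nonneg hE hdisj
    _ ≤ 1 := ENNReal.ofReal_le_one.mpr <| by
        simpa using integral_mono (hL.integrable 0) (integrable_const 1) hL0

lemma mul_measure_iUnion_le_of_le_lintegral_mixture [IsProbabilityMeasure P]
    {X : Type*} [MeasurableSpace X] (ν : Measure X) [SFinite ν] {g : X → ℕ → Ω → ℝ}
    (hg_meas : ∀ t, Measurable fun p : X × Ω => g p.1 t p.2)
    (hg : ∀ x, HasSupermartingaleMajorant F P (g x)) {B : ℕ → Set Ω}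
    (hB : ∀ t, MeasurableSet[F t] (B t)) {c : ℝ≥0∞}
    (hBc : ∀ t, ∀ ω ∈ B t, c ≤ ∫⁻ x, ENNReal.ofReal (g x t ω) ∂ν) :
    c * P (⋃ t, B t) ≤ ν univ := by
  set E := disjointed B with hE_def
  have hE : ∀ t, MeasurableSet[F t] (E t) := fun t => by
    rw [hE_def, disjointed_eq_inter_compl]
    exact (hB t).inter (MeasurableSet.biInter (Set.to_countable _)
      fun s hs => (F.mono (le_of_lt hs) _ (hB s)).compl)
  have hdisj : Pairwise (Disjoint on E) := disjoint_disjointed B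
  calc c * P (⋃ t, B t) = ∑' t, ∫⁻ _ in E t, c ∂P := by
        rw [← iUnion_disjointed, measure_iUnion hdisj fun t => F.le t _ (hE t),
          ← ENNReal.tsum_mul_left]
        simp
    _ ≤ ∑' t, ∫⁻ ω in E t, ∫⁻ x, ENNReal.ofReal (g x t ω) ∂ν ∂P :=
        ENNReal.tsum_le_tsum fun t => setLIntegral_mono' (F.le t _ (hE t))
          fun ω hω => hBc t ω (disjointed_subset B t hω)
    _ = ∫⁻ x, ∑' t, ∫⁻ ω in E t, ENNReal.ofReal (g x t ω) ∂P ∂ν := by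
        rw [lintegral_tsum fun t => ?_]
        · congr 1; funext t
          exact lintegral_lintegral_swap
            ((hg_meas t).ennreal_ofReal.comp measurable_swap).aemeasurable
        · exact ((hg_meas t).ennreal_ofReal.lintegral_prod_right').aemeasurable
    _ ≤ ∫⁻ _, 1 ∂ν := lintegral_mono fun x => (hg x).tsum_setLIntegral_le_one hE hdisj
    _ = ν univ := lintegral_one

lemma IsSubPsi.hasSupermartingaleMajorant [IsFiniteMeasure P] {S : ℕ → Ω → Fin d → ℝ}
    {V : ℕ → Ω → Matrix (Fin d) (Fin d) ℝ}
    (hsub : IsSubPsi P F (Set.Ici 0) (fun lam => lam ^ 2 / 2) S V) (x : Fin d → ℝ) :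
    HasSupermartingaleMajorant F P
      fun t ω => Real.exp (x ⬝ᵥ S t ω - quadForm (V t ω) x / 2) := by
  by_cases hx : x = 0
  · refine ⟨fun _ _ => 1, (martingale_const F P 1).supermartingale, fun _ _ => zero_le_one,
      fun _ => le_rfl, fun t => Eventually.of_forall fun ω => ?_⟩
    simp [hx, quadForm]
  have hxx : 0 < x ⬝ᵥ x := dotProduct_self_star_pos_iff.mpr hx
  set lam := √(x ⬝ᵥ x)
  have hlam : 0 < lam := Real.sqrt_pos.mpr hxx
  set θ := lam⁻¹ • x
  have hθ : θ ⬝ᵥ θ = 1 := by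
    rw [smul_dotProduct, dotProduct_smul, smul_smul, smul_eq_mul, ← sq, inv_pow,
      Real.sq_sqrt hxx.le, inv_mul_cancel₀ hxx.ne']
  have hx_eq : x = lam • θ := by rw [smul_smul, mul_inv_cancel₀ hlam.ne', one_smul]
  obtain ⟨L, hL, hL_nonneg, hL0, hdom⟩ := hsub.2.2.2 θ hθ lam (Real.sqrt_nonneg _)
  refine ⟨L, hL, hL_nonneg, hL0, fun t => (hdom t).mono fun ω hω => le_of_eq_of_le ?_ hω⟩
  clear_value lam θ
  subst hx_eq
  simp only [smul_dotProduct, quadForm_smul, smul_eq_mul]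
  ring_nf

lemma IsSubPsi.measure_iUnion_lt_quadForm_inv_le [IsProbabilityMeasure P] {S : ℕ → Ω → Fin d → ℝ}
    {V : ℕ → Ω → Matrix (Fin d) (Fin d) ℝ}
    (hsub : IsSubPsi P F (Set.Ici 0) (fun lam => lam ^ 2 / 2) S V)
    {U0 : Matrix (Fin d) (Fin d) ℝ} (hU0 : U0.PosDef) {δ : ℝ} (hδ : 0 < δ) :
    P (⋃ t, {ω | Real.log ((V t ω + U0).det / U0.det) + 2 * Real.log (1 / δ)
      < quadForm (V t ω + U0)⁻¹ (S t ω)}) ≤ ENNReal.ofReal δ := by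
  set B : ℕ → Set Ω := fun t => {ω | Real.log ((V t ω + U0).det / U0.det)
    + 2 * Real.log (1 / δ) < quadForm (V t ω + U0)⁻¹ (S t ω)}
  set ν := volume.withDensity fun x : Fin d → ℝ => ENNReal.ofReal (Real.exp (-(quadForm U0 x / 2)))
  set c := √(2 * π) ^ d / √U0.det
  have hc : 0 < c / δ := by
    have := hU0.det_pos
    positivity
  have hB t : MeasurableSet[F t] (B t) := by
    have := (hsub.1 t).measurable
    have := (hsub.2.1 t).measurable
    exact measurableSet_lt (by fun_prop) (by fun_prop)
  have hBc t : ∀ ω ∈ B t, ENNReal.ofReal (c / δ) ≤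
      ∫⁻ x, ENNReal.ofReal (Real.exp (x ⬝ᵥ S t ω - quadForm (V t ω) x / 2)) ∂ν := fun ω hω => by
    have hA := (hsub.2.2.1 t ω).add hU0
    rw [lintegral_exp_dotProduct_sub_quadForm_withDensity hA]
    exact ENNReal.ofReal_le_ofReal (div_sqrt_div_le_div_sqrt_mul_exp (by positivity)
      hA.det_pos hU0.det_pos hδ hω.le)
  have hmeas t : Measurable fun p : (Fin d → ℝ) × Ω =>
      Real.exp (p.1 ⬝ᵥ S t p.2 - quadForm (V t p.2) p.1 / 2) := by
    have := (hsub.1 t).measurable.mono (F.le t) le_rfl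
    have := (hsub.2.1 t).measurable.mono (F.le t) le_rfl
    fun_prop
  have hmix := mul_measure_iUnion_le_of_le_lintegral_mixture ν hmeas
    hsub.hasSupermartingaleMajorant hB hBc
  have hνc : ν univ = ENNReal.ofReal (c / δ) * ENNReal.ofReal δ := by
    rw [withDensity_exp_neg_quadForm_apply_univ hU0, ← ENNReal.ofReal_mul hc.le,
      div_mul_cancel₀ c hδ.ne']
  rwa [hνc, ENNReal.mul_le_mul_iff_right (ENNReal.ofReal_pos.mpr hc).ne'
    ENNReal.ofReal_ne_top] at hmix

end MethodOfMixtures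

/-- **Theorem (sub-Gaussian self-normalized bound, Abbasi-Yadkori et al. style).**
If `(S_t, V_t)` is a sub-ψ_N process with `ψ_N(λ) = λ²/2` and `λ_max = ∞` (a sub-Gaussian
process in ℝ^d), and `U₀` is a fixed symmetric positive-definite matrix, then for every
`δ ∈ (0,1)`, with probability at least `1 − δ`, for all `t ≥ 1`,
`‖S_t‖²_{(V_t+U₀)⁻¹} ≤ log(det(V_t+U₀)/det U₀) + 2 log(1/δ)`. -/
theorem subGaussian_self_normalized
    [m : MeasurableSpace Ω] (P : Measure Ω) [IsProbabilityMeasure P]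
    (F : Filtration ℕ m)
    (S : ℕ → Ω → Fin d → ℝ) (V : ℕ → Ω → Matrix (Fin d) (Fin d) ℝ)
    (hsub : IsSubPsi P F (Set.Ici 0) (fun lam => lam ^ 2 / 2) S V)
    (U0 : Matrix (Fin d) (Fin d) ℝ) (hU0 : U0.PosDef)
    (δ : ℝ) (hδ : δ ∈ Set.Ioo (0 : ℝ) 1) :
    ENNReal.ofReal (1 - δ) ≤
      P {ω | ∀ t, 1 ≤ t →
        (matNorm (V t ω + U0)⁻¹ (S t ω)) ^ 2 ≤
          Real.log ((V t ω + U0).det / U0.det) + 2 * Real.log (1 / δ)} := by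
  set B : ℕ → Set Ω := fun t => {ω | Real.log ((V t ω + U0).det / U0.det)
    + 2 * Real.log (1 / δ) < quadForm (V t ω + U0)⁻¹ (S t ω)}
  calc ENNReal.ofReal (1 - δ) = 1 - ENNReal.ofReal δ := by
        rw [ENNReal.ofReal_sub _ hδ.1.le, ENNReal.ofReal_one]
    _ ≤ 1 - P (⋃ t, B t) := tsub_le_tsub_left (hsub.measure_iUnion_lt_quadForm_inv_le hU0 hδ.1) 1
    _ ≤ P (⋃ t, B t)ᶜ := by
        rw [tsub_le_iff_left, ← measure_univ (μ := P), ← Set.union_compl_self (⋃ t, B t)]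
        exact measure_union_le _ _
    _ ≤ _ := by
        refine measure_mono fun ω hω t _ => ?_
        rw [matNorm_sq ((hsub.2.2.1 t ω).add hU0).inv.posSemidef]
        exact not_lt.mp fun h => hω (Set.mem_iUnion.mpr ⟨t, h⟩)

end
end

section
/- Let ψ: [0, λ_max) → [0,∞) be CGF-like and three times differentiable with ψ''' ≥ 0 on (0, λ_max). For x in the image of ψ', let λ*(x) = (ψ')⁻¹(x) (the unique maximizer of λ ↦ λx − ψ(λ) over [0, λ_max)). Then for every a in the image of ψ' and every r ≥ 1 such that r·a is also in the image of ψ': λ*(r·a) ≤ r·λ*(a). -/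
/-!
Since `ψ''' ≥ 0`, the derivative `ψ'` is convex on `[0, λ_max)`, and `ψ'(0) = 0`; hence
`r ψ'(λ) ≤ ψ'(rλ)` for `r ≥ 1`. At `λ = λ*(a)` this reads `ψ'(λ*(ra)) = ra ≤ ψ'(rλ*(a))`, and
strict monotonicity of `ψ'` gives `λ*(ra) ≤ rλ*(a)`.
-/

open Real Set Filter

noncomputable section

/-- A CGF-like function on `D = [0, λ_max)`: strictly convex, twice continuously
differentiable, nonnegative, `ψ(0) = 0`, and `ψ'(0+) = 0`. -/
def CGFLike (D : Set ℝ) (ψ : ℝ → ℝ) : Prop :=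
  StrictConvexOn ℝ D ψ ∧ ContDiffOn ℝ 2 ψ D ∧ ψ 0 = 0 ∧
  Tendsto (derivWithin ψ D) (nhdsWithin 0 (Set.Ioi 0)) (nhds 0) ∧
  ∀ x ∈ D, 0 ≤ ψ x

open Topology

theorem ConvexOn.mul_map_le_map_mul {D : Set ℝ} {g : ℝ → ℝ} (hg : ConvexOn ℝ D g)
    (h0 : 0 ∈ D) (hg0 : g 0 ≤ 0) {x r : ℝ} (hrx : r * x ∈ D) (hr : 1 ≤ r) :
    r * g x ≤ g (r * x) := by
  have hr0 : 0 < r := one_pos.trans_le hr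
  have h := hg.2 hrx h0 (inv_nonneg.2 hr0.le) (sub_nonneg.2 (inv_le_one_of_one_le₀ hr))
    (add_sub_cancel _ _)
  simp only [smul_eq_mul, mul_zero, add_zero, inv_mul_cancel_left₀ hr0.ne'] at h
  calc r * g x ≤ r * (r⁻¹ * g (r * x) + (1 - r⁻¹) * g 0) := by gcongr
    _ = g (r * x) + (r - 1) * g 0 := by field_simp
    _ ≤ g (r * x) := by linarith [mul_nonpos_of_nonneg_of_nonpos (sub_nonneg.2 hr) hg0]

theorem ConvexOn.le_mul_of_map_eq_mul {D : Set ℝ} {g : ℝ → ℝ} (hg : ConvexOn ℝ D g)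
    (hmono : StrictMonoOn g D) (h0 : 0 ∈ D) (hg0 : g 0 ≤ 0) {x y r : ℝ} (hx : 0 ≤ x)
    (hy : y ∈ D) (hr : 1 ≤ r) (hxy : g y = r * g x) : y ≤ r * x := by
  by_contra! hlt
  have hrx : r * x ∈ D := hg.1.ordConnected.out h0 hy ⟨by positivity, hlt.le⟩
  linarith [hg.mul_map_le_map_mul h0 hg0 hrx hr, hmono hrx hy hlt]

theorem convexOn_of_iteratedDerivWithin_two_nonneg {D : Set ℝ} (hD : Convex ℝ D)
    (hDu : UniqueDiffOn ℝ D) {f : ℝ → ℝ} (hf : ContDiffOn ℝ 2 f D)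
    (h2 : ∀ x ∈ interior D, 0 ≤ iteratedDerivWithin 2 f D x) : ConvexOn ℝ D f := by
  have hf' : DifferentiableOn ℝ (derivWithin f D) D :=
    (hf.derivWithin hDu (m := 1) (by norm_num)).differentiableOn (by norm_num)
  refine convexOn_of_hasDerivWithinAt2_nonneg hD hf.continuousOn
    (fun x hx ↦ ((hf.differentiableOn (by norm_num)) x (interior_subset hx)).hasDerivWithinAt.mono
      interior_subset)
    (fun x hx ↦ (hf' x (interior_subset hx)).hasDerivWithinAt.mono interior_subset) ?_
  intro x hx
  simpa only [iteratedDerivWithin_eq_iterate, Function.iterate_succ_apply,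
    Function.iterate_zero_apply] using h2 x hx

section

variable {lmax : EReal}

theorem interior_setOf_nonneg_coe_lt :
    interior {x : ℝ | 0 ≤ x ∧ (x : EReal) < lmax} = {x : ℝ | 0 < x ∧ (x : EReal) < lmax} := by
  change interior (Ici 0 ∩ ((↑) : ℝ → EReal) ⁻¹' Iio lmax) =
    Ioi 0 ∩ ((↑) : ℝ → EReal) ⁻¹' Iio lmax
  rw [interior_inter, interior_Ici, (isOpen_Iio.preimage continuous_coe_real_ereal).interior_eq]

theorem convex_setOf_nonneg_coe_lt : Convex ℝ {x : ℝ | 0 ≤ x ∧ (x : EReal) < lmax} :=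
  (convex_Ici 0).inter (ordConnected_Iio.preimage_mono EReal.coe_strictMono.monotone).convex

theorem interior_setOf_nonneg_coe_lt_mem_nhdsGT (h : 0 < lmax) :
    interior {x : ℝ | 0 ≤ x ∧ (x : EReal) < lmax} ∈ 𝓝[>] 0 := by
  rw [interior_setOf_nonneg_coe_lt]
  exact inter_mem self_mem_nhdsWithin <| mem_nhdsWithin_of_mem_nhds <|
    (isOpen_Iio.preimage continuous_coe_real_ereal).mem_nhds (by exact_mod_cast h)

end

/-- **Lemma (sublinearity of the argmax map `λ*`).**
Let `ψ : [0, λ_max) → [0,∞)` be CGF-like, three times differentiable with `ψ''' ≥ 0` on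
`(0, λ_max)`. With `λ*(x) = (ψ')⁻¹(x)` (the unique maximizer of `λ ↦ λx − ψ(λ)`), for
every `a` in the image of `ψ'` and every `r ≥ 1` with `r·a` also in the image of `ψ'`:
`λ*(r·a) ≤ r·λ*(a)`. -/
theorem lamStar_sublinear
    (lmax : EReal) (hlmax : 0 < lmax)
    (D : Set ℝ) (hD : D = {x : ℝ | 0 ≤ x ∧ (x : EReal) < lmax})
    (ψ : ℝ → ℝ) (hcgf : CGFLike D ψ)
    (hC3 : ContDiffOn ℝ 3 ψ D)
    (hd3 : ∀ x ∈ D, 0 < x → 0 ≤ iteratedDerivWithin 3 ψ D x)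
    (a r : ℝ) (hr : 1 ≤ r)
    (ha : a ∈ derivWithin ψ D '' D) (hra : r * a ∈ derivWithin ψ D '' D) :
    Function.invFunOn (derivWithin ψ D) D (r * a) ≤
      r * Function.invFunOn (derivWithin ψ D) D a := by
  obtain ⟨hstrict, hC2, -, hlim, -⟩ := hcgf
  have h0 : (0 : ℝ) ∈ D := hD ▸ ⟨le_rfl, by exact_mod_cast hlmax⟩
  have hconv : Convex ℝ D := hD ▸ convex_setOf_nonneg_coe_lt
  have hint : interior D ∈ 𝓝[>] 0 := hD ▸ interior_setOf_nonneg_coe_lt_mem_nhdsGT hlmax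
  have hDu : UniqueDiffOn ℝ D := uniqueDiffOn_convex hconv (nonempty_of_mem hint)
  have hg0 : derivWithin ψ D 0 = 0 :=
    tendsto_nhds_unique ((hC2.continuousOn_derivWithin hDu (by norm_num) 0 h0)
      |>.mono_of_mem_nhdsWithin (mem_of_superset hint interior_subset)) hlim
  have hgconv : ConvexOn ℝ D (derivWithin ψ D) := by
    refine convexOn_of_iteratedDerivWithin_two_nonneg hconv hDu
      (hC3.derivWithin hDu (by norm_num)) fun x hx ↦ ?_
    rw [← iteratedDerivWithin_succ']
    have hx' : 0 < x ∧ (x : EReal) < lmax := by rwa [hD, interior_setOf_nonneg_coe_lt] at hx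
    exact hd3 x (interior_subset hx) hx'.1
  have hgmono := hstrict.strictMonoOn_derivWithin (hC2.differentiableOn (by norm_num))
  have hnonneg : D ⊆ Ici 0 := by rw [hD]; exact fun x hx ↦ hx.1
  refine hgconv.le_mul_of_map_eq_mul hgmono h0 hg0.le (hnonneg (Function.invFunOn_mem ha))
    (Function.invFunOn_mem hra) hr ?_
  rw [Function.invFunOn_eq ha, Function.invFunOn_eq hra]

end
end

section
/- Let ψ: [0, λ_max) → [0,∞) be CGF-like with λ ↦ ψ(λ)/λ² nondecreasing on (0, λ_max). For u in the image of ψ', let λ*(u) = (ψ')⁻¹(u) and let ψ*(u) = sup_{λ∈[0,λ_max)}(λu − ψ(λ)) be the convex conjugate of ψ. Then for every u in the image of ψ': ψ*(u) ≥ u·λ*(u)/2. -/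
open Real Set Filter

noncomputable section

/-- The convex (Legendre–Fenchel) conjugate `ψ*(u) = sup_{λ ∈ D} (λu − ψ(λ))`. -/
def psiStar (D : Set ℝ) (ψ : ℝ → ℝ) (u : ℝ) : ℝ := ⨆ lam : D, ((lam : ℝ) * u - ψ lam)

/-- **Lemma.** If `ψ` is CGF-like on `[0, λ_max)` with `λ ↦ ψ(λ)/λ²` nondecreasing on
`(0, λ_max)`, then with `λ*(u) = (ψ')⁻¹(u)`, for every `u` in the image of `ψ'`:
`ψ*(u) ≥ u·λ*(u)/2`. -/
theorem psiStar_ge_half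
    (lmax : EReal) (hlmax : 0 < lmax)
    (D : Set ℝ) (hD : D = {x : ℝ | 0 ≤ x ∧ (x : EReal) < lmax})
    (ψ : ℝ → ℝ) (hcgf : CGFLike D ψ)
    (hratio : ∀ x ∈ D, ∀ y ∈ D, 0 < x → x ≤ y → ψ x / x ^ 2 ≤ ψ y / y ^ 2)
    (u : ℝ) (hu : u ∈ derivWithin ψ D '' D) :
    u * Function.invFunOn (derivWithin ψ D) D u / 2 ≤ psiStar D ψ u := by
  obtain ⟨lam0, hlam0D, hlam0⟩ := hu
  have hex : ∃ x ∈ D, derivWithin ψ D x = u := ⟨lam0, hlam0D, hlam0⟩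
  set f := derivWithin ψ D with hf
  set l := Function.invFunOn f D u with hl
  have hlD : l ∈ D := Function.invFunOn_mem hex
  have hfl : derivWithin ψ D l = u := Function.invFunOn_eq hex
  have hconv : ConvexOn ℝ D ψ := hcgf.1.convexOn
  have hdiff : DifferentiableOn ℝ ψ D :=
    hcgf.2.1.differentiableOn (by norm_num)
  -- subgradient inequality : for all x ∈ D, ψ x ≥ ψ l + u * (x - l)
  have hsub : ∀ x ∈ D, ψ l + u * (x - l) ≤ ψ x := by
    intro x hx
    rcases lt_trichotomy x l with h | h | h
    · have := hconv.slope_le_derivWithin hx hlD h (hdiff l hlD)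
      rw [slope_def_field, hfl] at this
      have hxl : 0 < l - x := by linarith
      rw [div_le_iff₀ hxl] at this
      nlinarith
    · simp [h]
    · have := hconv.derivWithin_le_slope hlD hx h (hdiff l hlD)
      rw [slope_def_field, hfl] at this
      have hxl : 0 < x - l := by linarith
      rw [le_div_iff₀ hxl] at this
      nlinarith
  have hl0 : 0 ≤ l := by rw [hD] at hlD; exact hlD.1
  -- key : ψ l ≤ u * l / 2
  have hkey : ψ l ≤ u * l / 2 := by
    rcases eq_or_lt_of_le hl0 with h0 | h0
    · simp [← h0, hcgf.2.2.1]
    · -- for x ∈ (0, l) : ψ l * (l + x) ≤ u * l ^ 2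
      have hstep : ∀ x ∈ Ioo 0 l, ψ l * (l + x) ≤ u * l ^ 2 := by
        intro x hx
        obtain ⟨hx1, hx2⟩ := hx
        have hxD : x ∈ D := by
          rw [hD]; rw [hD] at hlD
          exact ⟨hx1.le, lt_trans (by exact_mod_cast hx2) hlD.2⟩
        have hslope := hconv.slope_le_derivWithin hxD hlD hx2 (hdiff l hlD)
        rw [slope_def_field, hfl] at hslope
        have hxl : 0 < l - x := by linarith
        rw [div_le_iff₀ hxl] at hslope
        -- ψ x ≤ ψ l * x^2 / l^2
        have hrat := hratio x hxD l hlD hx1 hx2.le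
        have hxsq : (0:ℝ) < x ^ 2 := pow_pos hx1 2
        have hl2 : (0:ℝ) < l ^ 2 := by positivity
        rw [div_le_div_iff₀ hxsq hl2] at hrat
        nlinarith
      have hlim : Tendsto (fun x : ℝ => ψ l * (l + x)) (nhdsWithin l (Iio l)) (nhds (ψ l * (l + l))) :=
        (tendsto_const_nhds.mul ((tendsto_const_nhds.add tendsto_id))).mono_left nhdsWithin_le_nhds
      have hmem : Ioo 0 l ∈ nhdsWithin l (Iio l) := by
        rw [mem_nhdsWithin_iff_exists_mem_nhds_inter]
        exact ⟨Ioi 0, Ioi_mem_nhds h0, fun y hy => ⟨hy.1, hy.2⟩⟩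
      have h2 : ψ l * (l + l) ≤ u * l ^ 2 := by
        refine le_of_tendsto hlim ?_
        filter_upwards [hmem] with x hx using hstep x hx
      nlinarith
  -- bounded above and le_ciSup
  have hbdd : BddAbove (Set.range fun lam : D => ((lam : ℝ) * u - ψ lam)) := by
    refine ⟨l * u - ψ l, ?_⟩
    rintro _ ⟨⟨x, hx⟩, rfl⟩
    have := hsub x hx
    simp only
    nlinarith
  have hle : l * u - ψ l ≤ psiStar D ψ u := le_ciSup hbdd ⟨l, hlD⟩
  calc u * l / 2 ≤ l * u - ψ l := by nlinarith
    _ ≤ psiStar D ψ u := hle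

end
end
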